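/- arXiv:2502.02479 — 2 statements merged into one kernel-verified Lean document; each statement's English description precedes it below -/
import Mathlib

section
/- Let H be a class of C-Lipschitz functions from a pseudometric space (X, ρ_X) to a metric space (Y, ρ_Y), equipped with the sup metric ‖f − g‖ = sup_{x∈X} ρ_Y(f(x), g(x)). Then for any δ > 0, N(H, ‖·‖, δ) ≤ N(Y, ρ_Y, δ/2)^{N(X, ρ_X, δ/(2C))}, i.e., the covering number of H is at most the covering number of Y raised to the covering number of X. -/
/-! Snap each point of `X` to a nearby centre `π x` of the cover of `X`, then snap `h (π x)` to a
nearby centre of the cover of `Y`. The resulting function is `δ`-close to `h` by the Lipschitz bound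
and the triangle inequality, and it is determined by a map from the centres of `X` to those of `Y`. -/

section FactorThrough

variable {X ι Y : Type*} [Fintype ι] [DecidableEq ι] [DecidableEq (X → Y)]

def piFinsetComp (π : X → ι) (SY : Finset Y) : Finset (X → Y) :=
  (Fintype.piFinset fun _ : ι => SY).image fun g x => g (π x)

theorem card_piFinsetComp_le (π : X → ι) (SY : Finset Y) :
    (piFinsetComp π SY).card ≤ SY.card ^ Fintype.card ι :=
  Finset.card_image_le.trans_eq (by simp)

theorem comp_mem_piFinsetComp (π : X → ι) {SY : Finset Y} {g : ι → Y} (hg : ∀ i, g i ∈ SY) :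
    (fun x => g (π x)) ∈ piFinsetComp π SY :=
  Finset.mem_image_of_mem _ (Fintype.mem_piFinset.2 hg)

end FactorThrough

theorem dist_le_of_lipschitz_of_le {X Y : Type*} [PseudoMetricSpace Y] {ρ : X → X → ℝ} {C : ℝ}
    (hC : 0 ≤ C) {h : X → Y} (hh : ∀ x x', dist (h x) (h x') ≤ C * ρ x x')
    {x x' : X} {y : Y} {r ε : ℝ} (hx : ρ x x' ≤ r) (hy : dist (h x') y ≤ ε) :
    dist (h x) y ≤ C * r + ε :=
  calc dist (h x) y ≤ dist (h x) (h x') + dist (h x') y := dist_triangle _ _ _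
    _ ≤ C * r + ε := add_le_add ((hh x x').trans (mul_le_mul_of_nonneg_left hx hC)) hy

theorem lipschitz_class_covering_number_general
    {X Y : Type*} [MetricSpace Y]
    (ρX : X → X → ℝ)
    (C : ℝ) (hC : 0 < C)
    (H : Set (X → Y))
    (hHlip : ∀ h ∈ H, ∀ x x', dist (h x) (h x') ≤ C * ρX x x')
    (δ : ℝ)
    (SX : Finset X) (SY : Finset Y)
    (hSX : ∀ x, ∃ s ∈ SX, ρX x s ≤ δ / (2 * C))
    (hSY : ∀ y, ∃ s ∈ SY, dist y s ≤ δ / 2) :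
    ∃ SH : Finset (X → Y), SH.card ≤ SY.card ^ SX.card ∧
      ∀ h ∈ H, ∃ f ∈ SH, ∀ x, dist (h x) (f x) ≤ δ := by
  classical
  choose π hπmem hπdist using hSX
  choose q hqmem hqdist using hSY
  let πSX : X → SX := fun x => ⟨π x, hπmem x⟩
  refine ⟨piFinsetComp πSX SY, by simpa using card_piFinsetComp_le πSX SY, fun h hh => ?_⟩
  refine ⟨_, comp_mem_piFinsetComp πSX (g := fun s => q (h s)) fun _ => hqmem _, fun x => ?_⟩
  calc dist (h x) (q (h (π x)))
      ≤ C * (δ / (2 * C)) + δ / 2 :=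
        dist_le_of_lipschitz_of_le hC.le (hHlip h hh) (hπdist x) (hqdist _)
    _ = δ := by field_simp; ring

/-- a class `H` of `C`-Lipschitz functions from a pseudometric space `X`
to a metric space `Y` admits, in the sup metric, a `δ`-cover of size at most
`N(Y, δ/2) ^ N(X, δ/(2C))`: from any `δ/(2C)`-cover of `X` and `δ/2`-cover of `Y`
one builds a `δ`-cover of `H` of at most that many functions. -/
theorem lipschitz_class_covering_number
    {X Y : Type*} [MetricSpace Y]
    (ρX : X → X → ℝ)
    (hnonneg : ∀ x1 x2, 0 ≤ ρX x1 x2)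
    (hrefl : ∀ x, ρX x x = 0)
    (hsymm : ∀ x1 x2, ρX x1 x2 = ρX x2 x1)
    (htri : ∀ x1 x2 x3, ρX x1 x3 ≤ ρX x1 x2 + ρX x2 x3)
    (C : ℝ) (hC : 0 < C)
    (H : Set (X → Y))
    (hHlip : ∀ h ∈ H, ∀ x x', dist (h x) (h x') ≤ C * ρX x x')
    (δ : ℝ) (hδ : 0 < δ)
    (SX : Finset X) (SY : Finset Y)
    (hSX : ∀ x, ∃ s ∈ SX, ρX x s ≤ δ / (2 * C))
    (hSY : ∀ y, ∃ s ∈ SY, dist y s ≤ δ / 2) :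
    ∃ SH : Finset (X → Y), SH.card ≤ SY.card ^ SX.card ∧
      ∀ h ∈ H, ∃ f ∈ SH, ∀ x, dist (h x) (f x) ≤ δ :=
  lipschitz_class_covering_number_general ρX C hC H hHlip δ SX SY hSX hSY
end

section
/- Suppose Φ : ℝ^{k×d} → ℝ is injective up to row permutations (Φ(A) = Φ(B) implies A = P·B for some row permutation P), and Ψ : ℝ^{L×C} → ℝ^{L₁} is injective up to column permutations. Define X⁰_i = (Ψ(Z¹_i) ‖ X_i) where each matrix Z¹_i ∈ ℝ^{(L+L₀)×C} has columns carrying pairwise-distinct channel identifiers shared across all i (i.e., for i, i', the c-th columns of Z¹_i and Z¹_{i'} end in the same identifier vector ψ_c, and ψ_c ≠ ψ_{c'} for c ≠ c'). If Φ(X⁰) = Φ(X'⁰) for two such inputs (X,Z¹) and (X',Z'¹) sharing the identifier property, then there exist a row permutation P₁ ∈ S_k and a single channel permutation P₂ ∈ S_C such that X' = P₁X and Z'¹ = P₂P₁Z¹. -/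
/-- injectivity of the node encoding up to a node permutation and a
single global channel permutation. If `Φ` is injective up to row permutations, `Ψ` is
injective up to column (channel) permutations, and each input carries globally shared,
pairwise-distinct channel identifiers in its last `L₀` rows, then equality of the
encodings `Φ(X⁰) = Φ(X'⁰)` forces `X' = P₁X` and `Z'¹ = P₂P₁Z¹` for some `P₁ ∈ S_k`
and a single `P₂ ∈ S_C`. -/
theorem encoding_injective_up_to_global_channel_perm
    (k d L L0 C L1 : ℕ)
    (Φ : (Fin k → Fin (L1 + d) → ℝ) → ℝ)
    (hΦ : ∀ A B : Fin k → Fin (L1 + d) → ℝ, Φ A = Φ B →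
      ∃ P : Equiv.Perm (Fin k), ∀ i, A i = B (P i))
    (Ψ : (Fin (L + L0) → Fin C → ℝ) → Fin L1 → ℝ)
    (hΨ : ∀ M M' : Fin (L + L0) → Fin C → ℝ, Ψ M = Ψ M' →
      ∃ P : Equiv.Perm (Fin C), ∀ l c, M l c = M' l (P c))
    (X X' : Fin k → Fin d → ℝ)
    (Z1 Z1' : Fin k → Fin (L + L0) → Fin C → ℝ)
    (τ τ' : Fin C → Fin L0 → ℝ)
    (hτinj : Function.Injective τ) (hτ'inj : Function.Injective τ')
    (htag : ∀ i c j, Z1 i (Fin.natAdd L j) c = τ c j)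
    (htag' : ∀ i c j, Z1' i (Fin.natAdd L j) c = τ' c j)
    (X0 X0' : Fin k → Fin (L1 + d) → ℝ)
    (hX0 : ∀ i, X0 i = Fin.append (Ψ (fun l c => Z1 i l c)) (X i))
    (hX0' : ∀ i, X0' i = Fin.append (Ψ (fun l c => Z1' i l c)) (X' i))
    (heq : Φ X0 = Φ X0') :
    ∃ (P1 : Equiv.Perm (Fin k)) (P2 : Equiv.Perm (Fin C)),
      (∀ i, X i = X' (P1 i)) ∧ (∀ i l c, Z1 i l c = Z1' (P1 i) l (P2 c)) := by
  obtain ⟨P1, hP1⟩ := hΦ X0 X0' heq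
  -- split the append equality
  have happ : ∀ i, Ψ (fun l c => Z1 i l c) = Ψ (fun l c => Z1' (P1 i) l c) ∧
      X i = X' (P1 i) := by
    intro i
    have h := hP1 i
    rw [hX0, hX0'] at h
    constructor
    · funext j
      have := congrFun h (Fin.castAdd d j)
      simpa [Fin.append_left] using this
    · funext j
      have := congrFun h (Fin.natAdd L1 j)
      simpa [Fin.append_right] using this
  -- per-node channel permutations
  have hQ : ∀ i, ∃ Q : Equiv.Perm (Fin C), ∀ l c, Z1 i l c = Z1' (P1 i) l (Q c) := by
    intro i
    exact hΨ _ _ (happ i).1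
  choose Q hQ using hQ
  -- tags force Q i c to be independent of i
  have hQtag : ∀ i c, τ' (Q i c) = τ c := by
    intro i c
    funext j
    have := hQ i (Fin.natAdd L j) c
    rw [htag, htag'] at this
    exact this.symm
  rcases isEmpty_or_nonempty (Fin k) with hk | hk
  · exact ⟨P1, Equiv.refl _, fun i => (hk.false i).elim,
      fun i => (hk.false i).elim⟩
  · obtain ⟨i0⟩ := hk
    refine ⟨P1, Q i0, fun i => (happ i).2, fun i l c => ?_⟩
    have : Q i c = Q i0 c := hτ'inj (by rw [hQtag, hQtag])
    rw [hQ i l c, this]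
end
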